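/- If m > n, then ∑_{u=1}^U ∑_{i=1}^n Var(G_{u,i}) / f_{u,i}² ≤ 10·U·m²/n, where Var(G_{u,i}) = 4·m³·(P_{u,i}−Q_{u,i})²·(P_{u,i}+Q_{u,i}) + 2·m²·(P_{u,i}+Q_{u,i})². -/

import Mathlib

open NNReal

/-! The two summands of the variance are controlled by the two nontrivial terms of the maximum
defining `f`: `m n (p - q)² ≤ f²` absorbs the `m³` term and `n² (p + q)² ≤ f²` the `m²` term,
so each coordinate contributes at most `4 m² (p + q) / n + 2 m² / n²`. Summing over the `n`
coordinates, where `∑ (p + q) = 2`, gives `10 m² / n` per pair of distributions. -/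

/-- The deterministic normalizing quantity `f_{u,i}` (with `p = P_{u,i}`, `q = Q_{u,i}`):
`max{√(mn)·|p−q|, n·(p+q), 1}` if `m > n`, and `max{m·(p+q), 1}` otherwise. -/
noncomputable def fui (m n : ℕ) (p q : ℝ) : ℝ :=
  if n < m then max (max (Real.sqrt (m * n) * |p - q|) ((n : ℝ) * (p + q))) 1
  else max ((m : ℝ) * (p + q)) 1

/-- The variance `Var(G_{u,i})` as a function of `p = P_{u,i}`, `q = Q_{u,i}`. -/
def varG (m : ℕ) (p q : ℝ) : ℝ :=
  4 * (m : ℝ) ^ 3 * (p - q) ^ 2 * (p + q) + 2 * (m : ℝ) ^ 2 * (p + q) ^ 2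

section FuiBounds

variable {m n : ℕ} {p q : ℝ}

lemma fui_of_lt (h : n < m) :
    fui m n p q = max (max (Real.sqrt (m * n) * |p - q|) ((n : ℝ) * (p + q))) 1 :=
  if_pos h

lemma one_le_fui (h : n < m) : 1 ≤ fui m n p q := by
  rw [fui_of_lt h]
  exact le_max_right _ _

lemma mul_sq_sub_le_fui_sq (h : n < m) : (m : ℝ) * n * (p - q) ^ 2 ≤ fui m n p q ^ 2 := by
  have hle : Real.sqrt (m * n) * |p - q| ≤ fui m n p q := by
    rw [fui_of_lt h]
    exact le_trans (le_max_left _ _) (le_max_left _ _)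
  calc (m : ℝ) * n * (p - q) ^ 2 = (Real.sqrt (m * n) * |p - q|) ^ 2 := by
        rw [mul_pow, Real.sq_sqrt (by positivity), sq_abs]
    _ ≤ fui m n p q ^ 2 := pow_le_pow_left₀ (by positivity) hle 2

lemma sq_mul_add_le_fui_sq (h : n < m) (hpq : 0 ≤ p + q) :
    ((n : ℝ) * (p + q)) ^ 2 ≤ fui m n p q ^ 2 := by
  have hle : (n : ℝ) * (p + q) ≤ fui m n p q := by
    rw [fui_of_lt h]
    exact le_trans (le_max_right _ _) (le_max_left _ _)
  exact pow_le_pow_left₀ (by positivity) hle 2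

lemma varG_div_fui_sq_le (h : n < m) (hn : 0 < n) (hp : 0 ≤ p) (hq : 0 ≤ q) :
    varG m p q / fui m n p q ^ 2 ≤ 4 * (m : ℝ) ^ 2 * (p + q) / n + 2 * (m : ℝ) ^ 2 / n ^ 2 := by
  have hnR : (0 : ℝ) < n := by exact_mod_cast hn
  have hf : (0 : ℝ) < fui m n p q ^ 2 := by
    have := one_le_fui (p := p) (q := q) h
    positivity
  have hdiff := mul_sq_sub_le_fui_sq (p := p) (q := q) h
  have hsum := sq_mul_add_le_fui_sq h (add_nonneg hp hq)
  have hA : 4 * (m : ℝ) ^ 3 * (p - q) ^ 2 * (p + q) / fui m n p q ^ 2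
      ≤ 4 * (m : ℝ) ^ 2 * (p + q) / n := by
    rw [div_le_div_iff₀ hf hnR]
    have := mul_le_mul_of_nonneg_left hdiff
      (show (0 : ℝ) ≤ 4 * (m : ℝ) ^ 2 * (p + q) by positivity)
    linarith
  have hB : 2 * (m : ℝ) ^ 2 * (p + q) ^ 2 / fui m n p q ^ 2 ≤ 2 * (m : ℝ) ^ 2 / n ^ 2 := by
    rw [div_le_div_iff₀ hf (by positivity)]
    have := mul_le_mul_of_nonneg_left hsum (show (0 : ℝ) ≤ 2 * (m : ℝ) ^ 2 by positivity)
    linarith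
  rw [varG, add_div]
  exact add_le_add hA hB

end FuiBounds

lemma sum_varG_div_fui_sq_le {m n : ℕ} (h : n < m) (P Q : Fin n → ℝ)
    (hP0 : ∀ i, 0 ≤ P i) (hQ0 : ∀ i, 0 ≤ Q i) (hP : ∑ i, P i = 1) (hQ : ∑ i, Q i = 1) :
    ∑ i, varG m (P i) (Q i) / fui m n (P i) (Q i) ^ 2 ≤ 10 * (m : ℝ) ^ 2 / n := by
  have hn : 0 < n := Nat.pos_of_ne_zero fun h0 => by subst h0; simp at hP
  calc ∑ i, varG m (P i) (Q i) / fui m n (P i) (Q i) ^ 2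
      ≤ ∑ i, (4 * (m : ℝ) ^ 2 * (P i + Q i) / n + 2 * (m : ℝ) ^ 2 / n ^ 2) :=
        Finset.sum_le_sum fun i _ => varG_div_fui_sq_le h hn (hP0 i) (hQ0 i)
    _ = 10 * (m : ℝ) ^ 2 / n := by
        rw [Finset.sum_add_distrib, ← Finset.sum_div, ← Finset.mul_sum, Finset.sum_add_distrib,
          hP, hQ, Finset.sum_const, Finset.card_univ, Fintype.card_fin, nsmul_eq_mul]
        field_simp
        ring

theorem stmt11_general (U n m : ℕ) (hmn : n < m)
    (P Q : Fin U → Fin n → ℝ)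
    (hP0 : ∀ u i, 0 ≤ P u i) (hQ0 : ∀ u i, 0 ≤ Q u i)
    (hP : ∀ u, ∑ i, P u i = 1) (hQ : ∀ u, ∑ i, Q u i = 1) :
    ∑ u, ∑ i,
        (4 * (m : ℝ) ^ 3 * (P u i - Q u i) ^ 2 * (P u i + Q u i) +
            2 * (m : ℝ) ^ 2 * (P u i + Q u i) ^ 2) /
          (fui m n (P u i) (Q u i)) ^ 2 ≤
      10 * (U : ℝ) * (m : ℝ) ^ 2 / n :=
  calc _ ≤ ∑ _u : Fin U, 10 * (m : ℝ) ^ 2 / n :=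
        Finset.sum_le_sum fun u _ =>
          sum_varG_div_fui_sq_le hmn (P u) (Q u) (hP0 u) (hQ0 u) (hP u) (hQ u)
    _ = 10 * (U : ℝ) * (m : ℝ) ^ 2 / n := by
        rw [Finset.sum_const, Finset.card_univ, Fintype.card_fin, nsmul_eq_mul]
        ring

/-- If `m > n`, then
`∑_{u,i} Var(G_{u,i}) / f_{u,i}² ≤ 10·U·m²/n`, where
`Var(G_{u,i}) = 4·m³·(P−Q)²·(P+Q) + 2·m²·(P+Q)²`. -/
theorem stmt11 (U n m : ℕ) (hU : 1 ≤ U) (hn : 1 ≤ n) (hmn : n < m)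
    (P Q : Fin U → Fin n → ℝ)
    (hP0 : ∀ u i, 0 ≤ P u i) (hQ0 : ∀ u i, 0 ≤ Q u i)
    (hP : ∀ u, ∑ i, P u i = 1) (hQ : ∀ u, ∑ i, Q u i = 1) :
    ∑ u, ∑ i,
        (4 * (m : ℝ) ^ 3 * (P u i - Q u i) ^ 2 * (P u i + Q u i) +
            2 * (m : ℝ) ^ 2 * (P u i + Q u i) ^ 2) /
          (fui m n (P u i) (Q u i)) ^ 2 ≤
      10 * (U : ℝ) * (m : ℝ) ^ 2 / n :=
  stmt11_general U n m hmn P Q hP0 hQ0 hP hQ
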